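/- If an ordered set partition π of [n] word-avoids the pattern 132, then for each i, max(B_i) > min(B_{i+1}) implies min(B_i) > min(B_{i+1}); consequently des(π) = mindes(π) for every 132-word-avoiding ordered set partition. -/

import Mathlib

/-- The word of an ordered set partition: concatenate the blocks,
listing the elements of each block in increasing order. -/
def word (π : List (Finset ℕ)) : List ℕ :=
  (π.map (fun B : Finset ℕ => Finset.sort B (· ≤ ·))).flatten

/-- `π` is an ordered set partition of `[n] = {1,…,n}`: a list of nonempty,
pairwise disjoint finsets whose union is `{1,…,n}`. -/
def IsOSP (n : ℕ) (π : List (Finset ℕ)) : Prop :=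
  (∀ B ∈ π, B.Nonempty) ∧ π.Pairwise Disjoint ∧
    π.foldr (· ∪ ·) ∅ = Finset.Icc 1 n

noncomputable def minB (B : Finset ℕ) : ℕ := sInf (B : Set ℕ)
def maxB (B : Finset ℕ) : ℕ := B.sup id

/-- number of descents of a word -/
def desCount (w : List ℕ) : ℕ :=
  ((List.range (w.length - 1)).filter (fun i => w.getD (i + 1) 0 < w.getD i 0)).length

noncomputable def mindes (π : List (Finset ℕ)) : ℕ :=
  ((List.range (π.length - 1)).filter
    (fun i => minB (π.getD (i + 1) ∅) < minB (π.getD i ∅))).length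

def maxdes (π : List (Finset ℕ)) : ℕ :=
  ((List.range (π.length - 1)).filter
    (fun i => maxB (π.getD (i + 1) ∅) < maxB (π.getD i ∅))).length

noncomputable def pdes (π : List (Finset ℕ)) : ℕ :=
  ((List.range (π.length - 1)).filter
    (fun i => maxB (π.getD (i + 1) ∅) < minB (π.getD i ∅))).length

def Avoids12 (w : List ℕ) : Prop :=
  ¬ ∃ i j : ℕ, i < j ∧ j < w.length ∧ w.getD i 0 < w.getD j 0

def Avoids21 (w : List ℕ) : Prop :=
  ¬ ∃ i j : ℕ, i < j ∧ j < w.length ∧ w.getD j 0 < w.getD i 0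

def Avoids123 (w : List ℕ) : Prop :=
  ¬ ∃ i j k : ℕ, i < j ∧ j < k ∧ k < w.length ∧
    w.getD i 0 < w.getD j 0 ∧ w.getD j 0 < w.getD k 0

def Avoids132 (w : List ℕ) : Prop :=
  ¬ ∃ i j k : ℕ, i < j ∧ j < k ∧ k < w.length ∧
    w.getD i 0 < w.getD k 0 ∧ w.getD k 0 < w.getD j 0

def Avoids213 (w : List ℕ) : Prop :=
  ¬ ∃ i j k : ℕ, i < j ∧ j < k ∧ k < w.length ∧
    w.getD j 0 < w.getD i 0 ∧ w.getD i 0 < w.getD k 0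

def Avoids312 (w : List ℕ) : Prop :=
  ¬ ∃ i j k : ℕ, i < j ∧ j < k ∧ k < w.length ∧
    w.getD j 0 < w.getD k 0 ∧ w.getD k 0 < w.getD i 0

def Avoids321 (w : List ℕ) : Prop :=
  ¬ ∃ i j k : ℕ, i < j ∧ j < k ∧ k < w.length ∧
    w.getD k 0 < w.getD j 0 ∧ w.getD j 0 < w.getD i 0

/-- reverse-complement of an ordered set partition of `[n]` -/
def rcomp (n : ℕ) (π : List (Finset ℕ)) : List (Finset ℕ) :=
  (π.map (fun B => B.image (fun a => n + 1 - a))).reverse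

/-!
If `min B_{i+1} < max B_i` but `min B_i < min B_{i+1}`, then `min B_i`, `max B_i`, `min B_{i+1}`
occur in this order in the word and form a `132`. Hence for a `132`-avoider the descent condition
`min B_{i+1} < max B_i` at a block boundary is equivalent to `min B_{i+1} < min B_i`, and since the
word has no descents inside a block, `des = mindes`.
-/

namespace Finset

variable {α : Type*} [LinearOrder α] {s : Finset α}

theorem sort_eq_min'_cons (h : s.Nonempty) :
    s.sort (· ≤ ·) = s.min' h :: (s.erase (s.min' h)).sort (· ≤ ·) := by
  conv_lhs => rw [← insert_erase (s.min'_mem h)]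
  exact sort_insert _ (fun b hb => s.min'_le b (mem_of_mem_erase hb)) (notMem_erase _ _)

theorem getLast_sort (h : s.Nonempty) (hs : s.sort (· ≤ ·) ≠ []) :
    (s.sort (· ≤ ·)).getLast hs = s.max' h := by
  rw [List.getLast_eq_getElem, max'_eq_sorted_last]

theorem pair_sublist_sort (h : s.Nonempty) (hne : s.min' h ≠ s.max' h) :
    List.Sublist [s.min' h, s.max' h] (s.sort (· ≤ ·)) := by
  rw [sort_eq_min'_cons h]
  exact List.cons_sublist_cons.mpr <| List.singleton_sublist.mpr <|
    (mem_sort _).mpr (mem_erase.mpr ⟨hne.symm, s.max'_mem h⟩)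

end Finset

section Blocks

variable {B : Finset ℕ}

theorem minB_eq_min' (hB : B.Nonempty) : minB B = B.min' hB :=
  hB.csInf_eq_min'

theorem maxB_eq_max' (hB : B.Nonempty) : maxB B = B.max' hB :=
  (Finset.sup'_eq_sup hB id).symm

theorem minB_mem (hB : B.Nonempty) : minB B ∈ B :=
  minB_eq_min' hB ▸ B.min'_mem hB

theorem minB_le_maxB (hB : B.Nonempty) : minB B ≤ maxB B := by
  rw [minB_eq_min' hB, maxB_eq_max' hB]
  exact B.min'_le_max' hB

end Blocks

section AdjacentCount

variable {α : Type*} (r : α → α → Prop) [DecidableRel r] (d : α)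

/-- `desCount` and `mindes` are both of this form; the default `d` of `getD` is never read. -/
def adjCount (l : List α) : ℕ :=
  ((List.range (l.length - 1)).filter fun i => r (l.getD i d) (l.getD (i + 1) d)).length

theorem desCount_eq_adjCount (w : List ℕ) : desCount w = adjCount (fun a b => b < a) 0 w := rfl

theorem mindes_eq_adjCount (π : List (Finset ℕ)) :
    mindes π = adjCount (fun B C => minB C < minB B) ∅ π := rfl

variable {r d}

theorem adjCount_cons_cons (a b : α) (l : List α) :
    adjCount r d (a :: b :: l) = (if r a b then 1 else 0) + adjCount r d (b :: l) := by
  simp only [adjCount, List.length_cons, Nat.add_sub_cancel, List.range_succ_eq_map,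
    List.filter_cons, List.getD_cons_zero, List.getD_cons_succ, List.filter_map]
  split <;> simp_all [Function.comp_def]; omega

theorem adjCount_eq_zero_of_pairwise {l : List α} (hl : l.Pairwise fun a b => ¬ r a b) :
    adjCount r d l = 0 := by
  match l, hl with
  | [], _ => rfl
  | [_], _ => rfl
  | a :: b :: l, hl =>
    rw [adjCount_cons_cons, adjCount_eq_zero_of_pairwise hl.of_cons,
      if_neg (List.rel_of_pairwise_cons hl List.mem_cons_self)]

theorem adjCount_append_cons {u : List α} (hu : u ≠ []) (b : α) (t : List α) :
    adjCount r d (u ++ b :: t) =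
      adjCount r d u + (if r (u.getLast hu) b then 1 else 0) + adjCount r d (b :: t) := by
  match u, hu with
  | [a], _ =>
    rw [List.singleton_append, adjCount_cons_cons, List.getLast_singleton]
    exact congrArg (· + _) (Nat.zero_add _).symm
  | a :: a' :: u, _ =>
    rw [List.cons_append, List.cons_append, adjCount_cons_cons a a' (u ++ b :: t),
      ← List.cons_append, adjCount_append_cons (List.cons_ne_nil a' u), adjCount_cons_cons a a' u,
      List.getLast_cons_cons]
    omega

theorem adjCount_congr {s : α → α → Prop} [DecidableRel s] {l : List α}
    (h : ∀ i, i + 1 < l.length →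
      (r (l.getD i d) (l.getD (i + 1) d) ↔ s (l.getD i d) (l.getD (i + 1) d))) :
    adjCount r d l = adjCount s d l := by
  unfold adjCount
  congr 1
  refine List.filter_congr fun i hi => ?_
  rw [List.mem_range] at hi
  simp only [h i (by omega)]

end AdjacentCount

section Word

@[simp]
theorem word_nil : word [] = [] := rfl

@[simp]
theorem word_cons (B : Finset ℕ) (π : List (Finset ℕ)) :
    word (B :: π) = B.sort (· ≤ ·) ++ word π := by
  simp [word]

@[simp]
theorem word_append (π π' : List (Finset ℕ)) : word (π ++ π') = word π ++ word π' := by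
  simp [word]

theorem sort_append_sort_infix_word {π : List (Finset ℕ)} {i : ℕ} (hi : i + 1 < π.length) :
    π[i].sort (· ≤ ·) ++ π[i + 1].sort (· ≤ ·) <:+: word π := by
  have hπ : π.take i ++ π[i] :: π[i + 1] :: π.drop (i + 2) = π := by
    rw [← List.drop_eq_getElem_cons hi, ← List.drop_eq_getElem_cons, List.take_append_drop]
  refine ⟨word (π.take i), word (π.drop (i + 2)), ?_⟩
  rw [List.append_assoc, List.append_assoc, ← word_cons, ← word_cons, ← word_append, hπ]

/-- Blocks are sorted, so the word can only descend at a block boundary, from `max B_i`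
to `min B_{i+1}`. -/
theorem desCount_word {π : List (Finset ℕ)} (hne : ∀ B ∈ π, B.Nonempty) :
    desCount (word π) = adjCount (fun B C => minB C < maxB B) ∅ π := by
  rw [desCount_eq_adjCount]
  induction π with
  | nil => rfl
  | cons B π ih =>
    have hB := hne B List.mem_cons_self
    have hsorted : adjCount (fun a b => b < a) 0 (B.sort (· ≤ ·)) = 0 :=
      adjCount_eq_zero_of_pairwise ((B.pairwise_sort _).imp not_lt.mpr)
    rcases π with _ | ⟨C, π⟩
    · rw [word_cons, word_nil, List.append_nil]
      exact hsorted
    · have hC := hne C (List.mem_cons_of_mem _ List.mem_cons_self)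
      have hBs : B.sort (· ≤ ·) ≠ [] := by simpa [← List.length_pos_iff] using hB.card_pos
      have hword : word (C :: π) = minB C :: ((C.erase (minB C)).sort (· ≤ ·) ++ word π) := by
        rw [word_cons, C.sort_eq_min'_cons hC, minB_eq_min' hC, List.cons_append]
      rw [word_cons, hword, adjCount_append_cons hBs, hsorted, ← hword,
        ih fun D hD => hne D (List.mem_cons_of_mem _ hD), adjCount_cons_cons,
        B.getLast_sort hB, ← maxB_eq_max' hB, Nat.zero_add]

end Word

section Pattern132

theorem Avoids132.sublist {u w : List ℕ} (hw : Avoids132 w) (huw : u.Sublist w) : Avoids132 u := by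
  obtain ⟨f, hf⟩ := List.sublist_iff_exists_orderEmbedding_getElem?_eq.mp huw
  have hget (i : ℕ) : u.getD i 0 = w.getD (f i) 0 := by
    simp only [List.getD_eq_getElem?_getD, hf]
  rintro ⟨i, j, k, hij, hjk, hk, hik, hkj⟩
  have hfk : f k < w.length := by
    have := hf k
    rw [List.getElem?_eq_getElem hk, eq_comm, List.getElem?_eq_some_iff] at this
    exact this.1
  exact hw ⟨f i, f j, f k, f.strictMono hij, f.strictMono hjk, hfk,
    hget i ▸ hget k ▸ hik, hget k ▸ hget j ▸ hkj⟩

theorem not_avoids132 {a b c : ℕ} (hab : a < b) (hbc : b < c) : ¬ Avoids132 [a, c, b] :=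
  fun h => h ⟨0, 1, 2, by decide, by decide, by simp, hab, hbc⟩

/-- Otherwise `min B, max B, min C` is an occurrence of `132`. -/
theorem minB_lt_minB_of_avoids132 {B C : Finset ℕ} (hB : B.Nonempty) (hC : C.Nonempty)
    (hBC : Disjoint B C) (ha : Avoids132 (B.sort (· ≤ ·) ++ C.sort (· ≤ ·)))
    (h : minB C < maxB B) : minB C < minB B := by
  by_contra hle
  have hlt : minB B < minB C :=
    (not_lt.mp hle).lt_of_ne fun he => Finset.disjoint_left.mp hBC (minB_mem hB) (he ▸ minB_mem hC)
  rw [minB_eq_min' hB] at hlt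
  rw [maxB_eq_max' hB] at h
  have hpair := B.pair_sublist_sort hB (hlt.trans h).ne
  have hhead : List.Sublist [minB C] (C.sort (· ≤ ·)) := by
    rw [C.sort_eq_min'_cons hC, minB_eq_min' hC]
    exact List.cons_sublist_cons.mpr (List.nil_sublist _)
  exact not_avoids132 hlt h (ha.sublist (hpair.append hhead))

end Pattern132

theorem stmt6 (n : ℕ) (π : List (Finset ℕ)) (h : IsOSP n π)
    (ha : Avoids132 (word π)) :
    (∀ i : ℕ, i + 1 < π.length →
      minB (π.getD (i + 1) ∅) < maxB (π.getD i ∅) →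
      minB (π.getD (i + 1) ∅) < minB (π.getD i ∅)) ∧
    desCount (word π) = mindes π := by
  obtain ⟨hne, hdisj, -⟩ := h
  have hmin : ∀ i : ℕ, i + 1 < π.length →
      minB (π.getD (i + 1) ∅) < maxB (π.getD i ∅) →
      minB (π.getD (i + 1) ∅) < minB (π.getD i ∅) := by
    intro i hi
    rw [List.getD_eq_getElem _ _ hi, List.getD_eq_getElem _ _ (by omega)]
    exact minB_lt_minB_of_avoids132 (hne _ (List.getElem_mem _)) (hne _ (List.getElem_mem _))
      (List.pairwise_iff_getElem.mp hdisj i (i + 1) _ hi (lt_add_one i))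
      (ha.sublist (sort_append_sort_infix_word hi).sublist)
  refine ⟨hmin, ?_⟩
  rw [desCount_word hne, mindes_eq_adjCount]
  refine adjCount_congr fun i hi => ⟨hmin i hi, fun hlt => hlt.trans_le (minB_le_maxB ?_)⟩
  rw [List.getD_eq_getElem _ _ (by omega)]
  exact hne _ (List.getElem_mem _)
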